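/- Let (X, d_X) be a compact metric space and A = ⊕_{k=0}^n M_{m_k}(ℂ), and let tr_v be the tracial state associated to v = (v_0,…,v_n) with v_k ∈ [0,1] and Σ v_k = 1. With ‖·‖_𝗇 taken to be the C*-norm ‖·‖_A, the map x ↦ (tr_v)_x is an isometry from (X, d_X) into the state space of C(X,A) equipped with the Monge–Kantorovich metric of L^{(A),C(X)}: for all x, y ∈ X, mk_{L^{(A),C(X)}}((tr_v)_x, (tr_v)_y) = d_X(x,y). -/

import Mathlib

open scoped ENNReal
set_option synthInstance.maxHeartbeats 1000000
set_option maxHeartbeats 1000000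

section Defs

variable {X : Type*} [MetricSpace X] [CompactSpace X]
variable {A : Type*} [NormedRing A] [StarRing A] [CStarRing A]
  [NormedAlgebra ℂ A] [StarModule ℂ A] [CompleteSpace A]

/-- `nn` is a norm on `A` over `ℝ` (in particular, any norm over `ℂ` qualifies). -/
def IsNormOn (A : Type*) [NormedRing A] [NormedAlgebra ℂ A] (nn : A → ℝ) : Prop :=
  (∀ x, 0 ≤ nn x) ∧ (∀ x, nn x = 0 ↔ x = 0) ∧
    (∀ x y, nn (x + y) ≤ nn x + nn y) ∧ ∀ (r : ℝ) (x : A), nn ((r : ℂ) • x) = |r| * nn x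

/-- The Lipschitz-type quantity `l^{(n)}_{d_X}` on `C(X, A)`, valued in `[0,∞]`. -/
noncomputable def lipn (nn : A → ℝ) (a : C(X, A)) : ℝ≥0∞ :=
  ⨆ (p : X × X) (_ : p.1 ≠ p.2),
    ENNReal.ofReal (nn (a p.1 - a p.2) / dist p.1 p.2)

/-- The quotient norm of `C(X,A)/C(X, ℂ1_A)`. -/
noncomputable def quotCXA (a : C(X, A)) : ℝ :=
  sInf { r : ℝ | ∃ b : C(X, A), (∀ x, ∃ c : ℂ, b x = c • (1 : A)) ∧ r = ‖a - b‖ }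

/-- The quotient norm of `C(X,A)/ℂ1_{C(X,A)}`. -/
noncomputable def quotC (a : C(X, A)) : ℝ :=
  ⨅ c : ℂ, ‖a - c • (1 : C(X, A))‖

/-- The seminorm `L^{(n),C(X)}`. -/
noncomputable def LCXn (nn : A → ℝ) (a : C(X, A)) : ℝ≥0∞ :=
  max (lipn nn a) (ENNReal.ofReal (quotCXA a))

/-- The seminorm `L^{(n),ℂ}`. -/
noncomputable def LCn (nn : A → ℝ) (a : C(X, A)) : ℝ≥0∞ :=
  max (lipn nn a) (ENNReal.ofReal (quotC a))

/-- The seminorm `L^{(n),μ}`. -/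
noncomputable def Lmun (nn : A → ℝ) (μ : C(X, A) →L[ℂ] ℂ) (a : C(X, A)) : ℝ≥0∞ :=
  max (lipn nn a) (ENNReal.ofReal ‖a - μ a • (1 : C(X, A))‖)

end Defs

/-- A state on a unital C*-algebra: a continuous linear functional sending `1` to `1`
and `star b * b` to a nonnegative real for every `b`. -/
def IsState {B : Type*} [NormedRing B] [NormedAlgebra ℂ B] [StarRing B]
    (φ : B →L[ℂ] ℂ) : Prop :=
  φ 1 = 1 ∧ ∀ b : B, 0 ≤ (φ (star b * b)).re ∧ (φ (star b * b)).im = 0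

/-- A pure state: an extreme point of the state space. -/
def IsPureState {B : Type*} [NormedRing B] [NormedAlgebra ℂ B] [StarRing B]
    (φ : B →L[ℂ] ℂ) : Prop :=
  φ ∈ Set.extremePoints ℝ { ψ : B →L[ℂ] ℂ | IsState ψ }

/-- The Monge–Kantorovich distance associated to a `[0,∞]`-valued seminorm `L`. -/
noncomputable def mkDist {B : Type*} [NormedRing B] [NormedAlgebra ℂ B] [StarRing B]
    (L : B → ℝ≥0∞) (φ ψ : B →L[ℂ] ℂ) : ℝ≥0∞ :=
  ⨆ (a : B) (_ : IsSelfAdjoint a ∧ L a ≤ 1), ENNReal.ofReal ‖φ a - ψ a‖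


open scoped Matrix.Norms.L2Operator

section MatrixDefs

variable {n : ℕ} {m : Fin (n + 1) → ℕ}

/-- The matrix unit `e_{k,(p,q)}` of `⊕_k M_{m_k}(ℂ)`. -/
noncomputable def matUnit (k : Fin (n + 1)) (p q : Fin (m k)) :
    Π j : Fin (n + 1), Matrix (Fin (m j)) (Fin (m j)) ℂ :=
  Pi.single k (Matrix.single p q 1)

/-- The constant `k_μ = Σ_k Σ_{p,q} |μ(e_{k,(p,q)})|` associated to a state `μ`. -/
noncomputable def kConst
    (μ : (Π j : Fin (n + 1), Matrix (Fin (m j)) (Fin (m j)) ℂ) →L[ℂ] ℂ) : ℝ :=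
  ∑ k : Fin (n + 1), ∑ p : Fin (m k), ∑ q : Fin (m k), ‖μ (matUnit k p q)‖

/-- The functional `μ_x : a ↦ μ (a x)` on `C(X, ⊕_k M_{m_k}(ℂ))`. -/
noncomputable def stateAt {X : Type*} [MetricSpace X] [CompactSpace X]
    (μ : (Π j : Fin (n + 1), Matrix (Fin (m j)) (Fin (m j)) ℂ) →L[ℂ] ℂ) (x : X) :
    C(X, Π j : Fin (n + 1), Matrix (Fin (m j)) (Fin (m j)) ℂ) →L[ℂ] ℂ :=
  μ.comp (ContinuousMap.evalCLM ℂ x)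

/-- The tracial state `tr_v = ⊕_k v_k tr_{m_k}` on `⊕_k M_{m_k}(ℂ)`. -/
noncomputable def trV (v : Fin (n + 1) → ℝ) :
    (Π j : Fin (n + 1), Matrix (Fin (m j)) (Fin (m j)) ℂ) →L[ℂ] ℂ :=
  LinearMap.toContinuousLinearMap
    { toFun := fun a => ∑ k : Fin (n + 1), ((v k : ℂ) / (m k : ℂ)) * (a k).trace
      map_add' := by
        intro a b
        simp [Matrix.trace_add, mul_add, Finset.sum_add_distrib]
      map_smul' := by
        intro c a
        simp only [Pi.smul_apply, Matrix.trace_smul, smul_eq_mul, RingHom.id_apply,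
          Finset.mul_sum]
        exact Finset.sum_congr rfl fun k _ => by ring }

end MatrixDefs

/-!
The map `x ↦ (tr_v)_x` is `1`-Lipschitz because `tr_v` is contractive (`|tr_{m}(M)| ≤ ‖M‖`) and
`L(a) ≤ 1` makes `a` itself `1`-Lipschitz. Conversely, the scalar-valued function
`x' ↦ d(x', y) • 1` has `L ≤ 1` (its distance to `C(X, ℂ1_A)` is zero) and its values under
`(tr_v)_x` and `(tr_v)_y` differ by exactly `d(x, y)`.
-/

lemma Matrix.norm_entry_le_l2_opNorm {𝕜 ι κ : Type*} [RCLike 𝕜] [Fintype ι] [Fintype κ]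
    [DecidableEq κ] (M : Matrix ι κ 𝕜) (i : ι) (j : κ) : ‖M i j‖ ≤ ‖M‖ := by
  have hcol := M.l2_opNorm_mulVec (EuclideanSpace.single j 1)
  rw [PiLp.norm_single, norm_one, mul_one] at hcol
  refine le_trans ?_ hcol
  simpa [Matrix.mulVec_single] using
    PiLp.norm_apply_le ((EuclideanSpace.equiv ι 𝕜).symm (M.mulVec (Pi.single j 1))) i

lemma Matrix.norm_trace_le_card_mul_l2_opNorm {𝕜 ι : Type*} [RCLike 𝕜] [Fintype ι]
    [DecidableEq ι] (M : Matrix ι ι 𝕜) : ‖M.trace‖ ≤ Fintype.card ι * ‖M‖ :=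
  calc ‖M.trace‖ ≤ ∑ i, ‖M i i‖ := norm_sum_le _ _
    _ ≤ ∑ _i : ι, ‖M‖ := Finset.sum_le_sum fun i _ => M.norm_entry_le_l2_opNorm i i
    _ = Fintype.card ι * ‖M‖ := by simp

section TracialState

variable {n : ℕ} {m : Fin (n + 1) → ℕ} {v : Fin (n + 1) → ℝ}

lemma trV_apply (a : Π j : Fin (n + 1), Matrix (Fin (m j)) (Fin (m j)) ℂ) :
    trV v a = ∑ k, ((v k : ℂ) / (m k : ℂ)) * (a k).trace := rfl

lemma trV_one (hm : ∀ k, 0 < m k) (hv1 : ∑ k, v k = 1) : trV (m := m) v 1 = 1 := by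
  have hk : ∀ k, (m k : ℂ) ≠ 0 := fun k => Nat.cast_ne_zero.mpr (hm k).ne'
  simp only [trV_apply, Pi.one_apply, Matrix.trace_one, Fintype.card_fin,
    div_mul_cancel₀ _ (hk _)]
  exact_mod_cast hv1

lemma norm_trV_le_one (hm : ∀ k, 0 < m k) (hv : ∀ k, 0 ≤ v k ∧ v k ≤ 1)
    (hv1 : ∑ k, v k = 1) : ‖trV (m := m) v‖ ≤ 1 := by
  refine ContinuousLinearMap.opNorm_le_bound _ zero_le_one fun a => ?_
  have hterm : ∀ k, ‖((v k : ℂ) / (m k : ℂ)) * (a k).trace‖ ≤ v k * ‖a‖ := fun k =>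
    have hmk : (0 : ℝ) < m k := Nat.cast_pos.mpr (hm k)
    calc ‖((v k : ℂ) / (m k : ℂ)) * (a k).trace‖ = v k / m k * ‖(a k).trace‖ := by
          rw [norm_mul, norm_div, Complex.norm_real, Complex.norm_natCast,
            Real.norm_of_nonneg (hv k).1]
      _ ≤ v k / m k * (m k * ‖a k‖) := by
          gcongr
          · exact div_nonneg (hv k).1 hmk.le
          · simpa using (a k).norm_trace_le_card_mul_l2_opNorm
      _ = v k * ‖a k‖ := by field_simp
      _ ≤ v k * ‖a‖ := mul_le_mul_of_nonneg_left (norm_le_pi_norm a k) (hv k).1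
  calc ‖trV v a‖ ≤ ∑ k, v k * ‖a‖ :=
        (norm_sum_le _ _).trans (Finset.sum_le_sum fun k _ => hterm k)
    _ = 1 * ‖a‖ := by rw [← Finset.sum_mul, hv1]

end TracialState

section MongeKantorovich

variable {X : Type*} [MetricSpace X] {A : Type*} [NormedRing A]

lemma lipn_norm_le_one_iff {a : C(X, A)} : lipn (‖·‖) a ≤ 1 ↔ LipschitzWith 1 a := by
  simp only [lipn, iSup_le_iff, ENNReal.ofReal_le_one, lipschitzWith_iff_dist_le_mul,
    NNReal.coe_one, one_mul, dist_eq_norm, Prod.forall]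
  refine forall₂_congr fun x y => ⟨fun h => ?_, fun h hxy => ?_⟩
  · rcases eq_or_ne x y with rfl | hxy
    · simp
    · exact (div_le_one (dist_pos.mpr hxy)).mp (h hxy)
  · exact div_le_one_of_le₀ h dist_nonneg

variable [CompactSpace X] [NormedAlgebra ℂ A]

lemma quotCXA_eq_zero {a : C(X, A)} (ha : ∀ x, ∃ c : ℂ, a x = c • (1 : A)) :
    quotCXA a = 0 := by
  refine IsLeast.csInf_eq ⟨⟨a, ha, by simp⟩, ?_⟩
  rintro r ⟨b, -, rfl⟩
  exact norm_nonneg _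

variable [StarRing A] [ContinuousStar A]

lemma mkDist_comp_evalCLM_le (μ : A →L[ℂ] ℂ) (hμ : ‖μ‖ ≤ 1) (x y : X) :
    mkDist (LCXn (‖·‖)) (μ.comp (ContinuousMap.evalCLM ℂ x))
        (μ.comp (ContinuousMap.evalCLM ℂ y)) ≤ ENNReal.ofReal (dist x y) := by
  refine iSup₂_le fun a ⟨_, ha⟩ => ENNReal.ofReal_le_ofReal ?_
  have hlip : LipschitzWith 1 a := lipn_norm_le_one_iff.mp (le_of_max_le_left ha)
  calc ‖μ (a x) - μ (a y)‖ = ‖μ (a x - a y)‖ := by rw [map_sub]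
    _ ≤ ‖a x - a y‖ := (μ.le_of_opNorm_le hμ _).trans_eq (one_mul _)
    _ ≤ dist x y := by simpa [dist_eq_norm] using hlip.dist_le_mul x y

lemma le_mkDist_comp_evalCLM [StarModule ℂ A] [NormOneClass A] (μ : A →L[ℂ] ℂ) (hμ : μ 1 = 1)
    (x y : X) :
    ENNReal.ofReal (dist x y) ≤ mkDist (LCXn (‖·‖)) (μ.comp (ContinuousMap.evalCLM ℂ x))
        (μ.comp (ContinuousMap.evalCLM ℂ y)) := by
  let f : C(X, A) := ⟨fun x' => ((dist x' y : ℝ) : ℂ) • (1 : A), by fun_prop⟩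
  have hself : IsSelfAdjoint f := by
    ext x'
    simp [f, star_smul]
  have hlip : LipschitzWith 1 f := by
    refine LipschitzWith.of_dist_le_mul fun x₁ x₂ => ?_
    simpa [f, dist_eq_norm, ← sub_smul, norm_smul] using abs_dist_sub_le x₁ x₂ y
  have hL : LCXn (‖·‖) f ≤ 1 :=
    max_le (lipn_norm_le_one_iff.mpr hlip) (by rw [quotCXA_eq_zero fun x' => ⟨_, rfl⟩]; simp)
  calc ENNReal.ofReal (dist x y) = ENNReal.ofReal ‖μ (f x) - μ (f y)‖ := by simp [f, hμ]
    _ ≤ _ := le_iSup₂ (f := fun (a : C(X, A)) _ => ENNReal.ofReal ‖μ (a x) - μ (a y)‖) f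
        ⟨hself, hL⟩

end MongeKantorovich

/-- with the C*-norm itself as the norm `nn`, the map `x ↦ (tr_v)_x`
is an isometry from `(X, d_X)` into the state space of `C(X, ⊕_k M_{m_k}(ℂ))`
equipped with the Monge–Kantorovich metric of `L^{(A),C(X)}`. -/
theorem statement18
    (X : Type*) [MetricSpace X] [CompactSpace X]
    (n : ℕ) (m : Fin (n + 1) → ℕ) (hm : ∀ k, 0 < m k)
    (v : Fin (n + 1) → ℝ) (hv : ∀ k, 0 ≤ v k ∧ v k ≤ 1) (hv1 : ∑ k, v k = 1) :
    ∀ x y : X,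
      mkDist
          (LCXn (fun a : Π j : Fin (n + 1), Matrix (Fin (m j)) (Fin (m j)) ℂ => ‖a‖))
          (stateAt (trV v) x) (stateAt (trV v) y)
        = ENNReal.ofReal (dist x y) := by
  intro x y
  have : ∀ k, Nonempty (Fin (m k)) := fun k => ⟨⟨0, hm k⟩⟩
  exact le_antisymm (mkDist_comp_evalCLM_le _ (norm_trV_le_one hm hv hv1) x y)
    (le_mkDist_comp_evalCLM _ (trV_one hm hv1) x y)
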